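/- Let S_t = σ_t(M_t) be an information state with cost distribution ρ, let π : 𝒮 × (0,1] → 𝒰 be a time-invariant control law with induced memory-based strategy g given by g_t(m_t) = π(σ_t(m_t), γ^t), and let 𝒯(π) be the law-dependent operator. Then for every n ∈ ℕ, every t ∈ ℕ and every realization m_t of the memory: γ^{n+t}·c^min/(1−γ) + γ^t·[𝒯(π)^n Λ^0](σ_t(m_t), γ^t) + sup_{a_t ∈ [[A_t | m_t]]} a_t ≤ V_t^g(m_t) ≤ sup_{a_t ∈ [[A_t | m_t]]} a_t + γ^t·[𝒯(π)^n Λ^0](σ_t(m_t), γ^t) + γ^{n+t}·c^max/(1−γ), where Λ^0 ≡ 0. -/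

import Mathlib

open Set Filter

noncomputable section

/-- Hausdorff distance built from an arbitrary distance function `η`,
`ℋ(A,B) = max{sup_{a∈A} inf_{b∈B} η a b, sup_{b∈B} inf_{a∈A} η a b}`. -/
def hausd {α : Type*} (η : α → α → ℝ) (A B : Set α) : ℝ :=
  max (sSup ((fun a => sInf ((fun b => η a b) '' B)) '' A))
      (sSup ((fun b => sInf ((fun a => η a b) '' A)) '' B))

/-- The time-invariant DP operator `𝒯` for general information states:
`[𝒯Λ](s,z) = inf_u sup_{c,s'} (c + γ·Λ(s',γz) + ρ(c,s'|s,u)/z)`, the sup being over the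
support of the cost distribution `ρ` (off the support `ρ = −∞`). -/
def DPop {Ss Uu : Type*} (γ : ℝ) (ρ : ℝ → Ss → Ss → Uu → EReal)
    (Λ : Ss → ℝ → ℝ) (s : Ss) (z : ℝ) : ℝ :=
  sInf (Set.range fun u : Uu => sSup ((fun p : ℝ × Ss =>
    p.1 + γ * Λ p.2 (γ * z) + (ρ p.1 p.2 s u).toReal / z) '' {p | ρ p.1 p.2 s u ≠ ⊥}))

/-- Iterates `Λ^n = 𝒯^n Λ^0` starting from `Λ^0 ≡ 0`. -/
def DPopIter {Ss Uu : Type*} (γ : ℝ) (ρ : ℝ → Ss → Ss → Uu → EReal) : ℕ → Ss → ℝ → ℝ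
  | 0 => fun _ _ => 0
  | (n+1) => DPop γ ρ (DPopIter γ ρ n)

/-- The law-dependent operator `𝒯(π)`. -/
def DPopLaw {Ss Uu : Type*} (γ : ℝ) (ρ : ℝ → Ss → Ss → Uu → EReal) (π : Ss → ℝ → Uu)
    (Λ : Ss → ℝ → ℝ) (s : Ss) (z : ℝ) : ℝ :=
  sSup ((fun p : ℝ × Ss =>
    p.1 + γ * Λ p.2 (γ * z) + (ρ p.1 p.2 s (π s z)).toReal / z) '' {p | ρ p.1 p.2 s (π s z) ≠ ⊥})

/-- Iterates `𝒯(π)^n Λ^0` starting from `Λ^0 ≡ 0`. -/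
def DPopLawIter {Ss Uu : Type*} (γ : ℝ) (ρ : ℝ → Ss → Ss → Uu → EReal) (π : Ss → ℝ → Uu) :
    ℕ → Ss → ℝ → ℝ
  | 0 => fun _ _ => 0
  | (n+1) => DPopLaw γ ρ π (DPopLawIter γ ρ π n)

/-- The time-invariant DP operator `𝒯̄` for problems with observable costs:
`[𝒯̄Λ̄](s̄) = inf_u sup_{(c,s̄') ∈ F(s̄,u)} (c + γ·Λ̄(s̄'))` where `F s̄ u = [[C, S̄' | s̄, u]]`. -/
def DPopB {Sb Uu : Type*} (γ : ℝ) (F : Sb → Uu → Set (ℝ × Sb)) (Λ : Sb → ℝ) (s : Sb) : ℝ :=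
  sInf (Set.range fun u : Uu => sSup ((fun p : ℝ × Sb => p.1 + γ * Λ p.2) '' F s u))

/-- Iterates `Λ̄^n = 𝒯̄^n Λ̄^0` starting from `Λ̄^0 ≡ 0`. -/
def DPopBIter {Sb Uu : Type*} (γ : ℝ) (F : Sb → Uu → Set (ℝ × Sb)) : ℕ → Sb → ℝ
  | 0 => fun _ => 0
  | (n+1) => DPopB γ F (DPopBIter γ F n)

/-- The law-dependent observable-cost operator. -/
def DPopBLaw {Sb Uu : Type*} (γ : ℝ) (F : Sb → Uu → Set (ℝ × Sb)) (π : Sb → Uu)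
    (Λ : Sb → ℝ) (s : Sb) : ℝ :=
  sSup ((fun p : ℝ × Sb => p.1 + γ * Λ p.2) '' F s (π s))

/-- `β_t(T)` error coefficients, fuel-indexed: `beta γ e k t = β_t(t+k)` with
`β_T(T) = γ^T·e` and `β_t(T) = β_{t+1}(T) + γ^t·e`. -/
def beta (γ e : ℝ) : ℕ → ℕ → ℝ
  | 0, t => γ ^ t * e
  | (k+1), t => beta γ e k (t+1) + γ ^ t * e

/-- A partially observed non-stochastic input–output system with bounded costs:
disturbances `W_t ∈ 𝒲`, actions `U_t ∈ 𝒰`, observations `Y_0 = h_0(W_0)`,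
`Y_{t+1} = h_{t+1}(W_{0:t}, U_{0:t})`, and costs `C_t = d_t(W_{0:t}, U_{0:t}) ∈ 𝒞 ⊆ [cmin, cmax] ⊂ ℝ≥0`,
with a discount factor `γ ∈ (0,1)`. -/
structure Sys where
  W : Type
  U : Type
  Y : Type
  [hW : Nonempty W]
  [hU : Nonempty U]
  [hY : Nonempty Y]
  γ : ℝ
  cmin : ℝ
  cmax : ℝ
  h0 : W → Y
  h : (t : ℕ) → (Fin (t+1) → W) → (Fin (t+1) → U) → Y
  d : (t : ℕ) → (Fin (t+1) → W) → (Fin (t+1) → U) → ℝ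
  hγ0 : 0 < γ
  hγ1 : γ < 1
  hcmin : 0 ≤ cmin
  hcost : ∀ t ω υ, d t ω υ ∈ Set.Icc cmin cmax

attribute [instance] Sys.hW Sys.hU Sys.hY

namespace Sys

variable (S : Sys)

/-- `a^max = c^max/(1-γ)`. -/
def amax : ℝ := S.cmax / (1 - S.γ)

/-- Memory space at time `t`: `M_t = (Y_{0:t}, U_{0:t-1})`. -/
abbrev Mem (t : ℕ) : Type := (Fin (t+1) → S.Y) × (Fin t → S.U)

/-- Control strategies `g = (g_0, g_1, …)`, `U_t = g_t(M_t)`. -/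
abbrev Strat : Type := (t : ℕ) → S.Mem t → S.U

/-- The memory realization at time `0` generated by an initial observation `y_0`. -/
def mem0 (y : S.Y) : S.Mem 0 := (fun _ => y, Fin.elim0)

/-- Open-loop observation `Y_s` generated by disturbances `ω` and actions `u_{0:s-1}`. -/
def oy (ω : ℕ → S.W) : (s : ℕ) → (Fin s → S.U) → S.Y
  | 0, _ => S.h0 (ω 0)
  | (t+1), υ => S.h t (fun i : Fin (t+1) => ω i) υ

/-- Open-loop cost `C_t` generated by disturbances `ω` and actions `u_{0:t}`. -/
def oc (ω : ℕ → S.W) (t : ℕ) (υ : Fin (t+1) → S.U) : ℝ :=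
  S.d t (fun i : Fin (t+1) => ω i) υ

/-- Open-loop accrued cost `A_t = Σ_{ℓ<t} γ^ℓ C_ℓ`. -/
def oA (ω : ℕ → S.W) (t : ℕ) (υ : Fin t → S.U) : ℝ :=
  ∑ ℓ : Fin t, S.γ ^ (ℓ : ℕ) *
    S.oc ω ℓ (fun j : Fin ((ℓ : ℕ) + 1) => υ ⟨j, by have := j.isLt; have := ℓ.isLt; omega⟩)

/-- Open-loop memory at time `t` generated by disturbances `ω` and actions `u_{0:t-1}`. -/
def omem (ω : ℕ → S.W) (t : ℕ) (υ : Fin t → S.U) : S.Mem t :=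
  (fun i : Fin (t+1) =>
    S.oy ω i (fun j : Fin (i : ℕ) => υ ⟨j, by have := j.isLt; have := i.isLt; omega⟩), υ)

/-- Disturbance realizations consistent with the memory realization `m_t`. -/
def consistent (t : ℕ) (m : S.Mem t) : Set (ℕ → S.W) := {ω | S.omem ω t m.2 = m}

/-- `[[A_t | m_t]]`, the conditional range of the accrued cost. -/
def Arange (t : ℕ) (m : S.Mem t) : Set ℝ :=
  (fun ω => S.oA ω t m.2) '' S.consistent t m

/-- Closed-loop memory `M_t` generated by strategy `g` and disturbances `ω`. -/
def memOf (g : S.Strat) (ω : ℕ → S.W) : (t : ℕ) → S.Mem t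
  | 0 => (fun _ => S.h0 (ω 0), Fin.elim0)
  | (t+1) =>
    let m := memOf g ω t
    let us : Fin (t+1) → S.U := Fin.snoc m.2 (g t m)
    (Fin.snoc m.1 (S.h t (fun i : Fin (t+1) => ω i) us), us)

/-- Closed-loop action `U_t = g_t(M_t)`. -/
def act (g : S.Strat) (ω : ℕ → S.W) (t : ℕ) : S.U := g t (S.memOf g ω t)

/-- Closed-loop cost `C_t`. -/
def ccost (g : S.Strat) (ω : ℕ → S.W) (t : ℕ) : ℝ :=
  S.d t (fun i : Fin (t+1) => ω i) (fun i : Fin (t+1) => S.act g ω i)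

/-- Closed-loop accrued cost `A_t = Σ_{ℓ<t} γ^ℓ C_ℓ`. -/
def cA (g : S.Strat) (ω : ℕ → S.W) (t : ℕ) : ℝ :=
  ∑ ℓ ∈ Finset.range t, S.γ ^ ℓ * S.ccost g ω ℓ

/-- Closed-loop cost-to-go `C_t^∞ = Σ_{ℓ≥t} γ^{ℓ-t} C_ℓ`. -/
def cCinf (g : S.Strat) (ω : ℕ → S.W) (t : ℕ) : ℝ :=
  ∑' k : ℕ, S.γ ^ k * S.ccost g ω (t + k)

/-- Strategy value function
`V_t^g(m_t) = sup_{(a,c^∞) ∈ [[A_t, C_t^∞ | m_t]]^g} (a + γ^t c^∞)`. -/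
def V (g : S.Strat) (t : ℕ) (m : S.Mem t) : ℝ :=
  sSup ((fun ω => S.cA g ω t + S.γ ^ t * S.cCinf g ω t) '' {ω | S.memOf g ω t = m})

/-- Optimal value function `V_t(m_t) = inf_g V_t^g(m_t)`
(the infimum over strategies consistent with the realization `m_t`). -/
def Vopt (t : ℕ) (m : S.Mem t) : ℝ :=
  sInf ((fun g => S.V g t m) '' {g : S.Strat | ∃ ω, S.memOf g ω t = m})

/-- Strategy-dependent finite-horizon function, fuel-indexed:
`Jg g n t m = J_t^g(m_t; t+n)` with `J_T^g(m_T;T) = sup_{[[A_T,C_T|m_T]]^g}(a_T + γ^T c_T)` and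
`J_t^g(m_t;T) = sup_{m_{t+1} ∈ [[M_{t+1}|m_t]]^g} J_{t+1}^g(m_{t+1};T)`. -/
def Jg (g : S.Strat) : ℕ → (t : ℕ) → S.Mem t → ℝ
  | 0, t, m => sSup ((fun ω => S.cA g ω t + S.γ ^ t * S.ccost g ω t) '' {ω | S.memOf g ω t = m})
  | (n+1), t, m =>
    sSup ((fun ω => Jg g n (t+1) (S.memOf g ω (t+1))) '' {ω | S.memOf g ω t = m})

/-- Optimal finite-horizon function, fuel-indexed: `Jopt n t m = J_t(m_t; t+n)` with
`J_T(m_T;T) = inf_{u_T} sup_{[[A_T,C_T|m_T,u_T]]}(a_T + γ^T c_T)` and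
`J_t(m_t;T) = inf_{u_t} sup_{m_{t+1} ∈ [[M_{t+1}|m_t,u_t]]} J_{t+1}(m_{t+1};T)`. -/
def Jopt : ℕ → (t : ℕ) → S.Mem t → ℝ
  | 0, t, m => sInf (Set.range fun u : S.U =>
      sSup ((fun ω => S.oA ω t m.2 + S.γ ^ t * S.oc ω t (Fin.snoc m.2 u)) '' S.consistent t m))
  | (n+1), t, m => sInf (Set.range fun u : S.U =>
      sSup ((fun ω => Jopt n (t+1) (S.omem ω (t+1) (Fin.snoc m.2 u))) '' S.consistent t m))

/-- The conditional accrued distribution `r_t((c,s) | m_t, u_t)` of the pair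
`(C_t, S_{t+1})` where `S_{t+1} = σ_{t+1}(M_{t+1})`:
`r_t(x|y) = sup_{a ∈ [0,a^max]}(a + 𝕀(x,a|y)) − sup_{a ∈ [0,a^max]}(a + 𝕀(a|y))` in `ℝ ∪ {−∞}`. -/
def rcs {Ss : Type*} (σ : (t : ℕ) → S.Mem t → Ss) (t : ℕ) (c : ℝ) (s : Ss)
    (m : S.Mem t) (u : S.U) : EReal :=
  sSup ((fun a : ℝ => (a : EReal)) '' {a | a ∈ Set.Icc 0 S.amax ∧ ∃ ω ∈ S.consistent t m,
      S.oc ω t (Fin.snoc m.2 u) = c ∧ σ (t+1) (S.omem ω (t+1) (Fin.snoc m.2 u)) = s ∧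
      S.oA ω t m.2 = a}) -
  sSup ((fun a : ℝ => (a : EReal)) '' {a | a ∈ Set.Icc 0 S.amax ∧ ∃ ω ∈ S.consistent t m,
      S.oA ω t m.2 = a})

/-! ### Observable costs -/

/-- Memory space with observable costs: `M_t = (Y_{0:t}, C_{0:t-1}, U_{0:t-1})`. -/
abbrev MemO (t : ℕ) : Type := (Fin (t+1) → S.Y) × (Fin t → ℝ) × (Fin t → S.U)

/-- Strategies for the observable-cost problem. -/
abbrev StratO : Type := (t : ℕ) → S.MemO t → S.U

/-- The observable-cost memory realization at time `0` from an initial observation. -/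
def memO0 (y : S.Y) : S.MemO 0 := (fun _ => y, Fin.elim0, Fin.elim0)

/-- Open-loop observable-cost memory generated by `ω` and actions `u_{0:t-1}`. -/
def omemO (ω : ℕ → S.W) (t : ℕ) (υ : Fin t → S.U) : S.MemO t :=
  (fun i : Fin (t+1) =>
      S.oy ω i (fun j : Fin (i : ℕ) => υ ⟨j, by have := j.isLt; have := i.isLt; omega⟩),
   fun ℓ : Fin t =>
      S.oc ω ℓ (fun j : Fin ((ℓ : ℕ) + 1) => υ ⟨j, by have := j.isLt; have := ℓ.isLt; omega⟩),
   υ)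

/-- Disturbances consistent with an observable-cost memory realization. -/
def consistentO (t : ℕ) (m : S.MemO t) : Set (ℕ → S.W) := {ω | S.omemO ω t m.2.2 = m}

/-- `[[A_t | m_t]]` for the observable-cost problem. -/
def ArangeO (t : ℕ) (m : S.MemO t) : Set ℝ :=
  (fun ω => S.oA ω t m.2.2) '' S.consistentO t m

/-- Closed-loop observable-cost memory. -/
def memOfO (g : S.StratO) (ω : ℕ → S.W) : (t : ℕ) → S.MemO t
  | 0 => (fun _ => S.h0 (ω 0), Fin.elim0, Fin.elim0)
  | (t+1) =>
    let m := memOfO g ω t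
    let us : Fin (t+1) → S.U := Fin.snoc m.2.2 (g t m)
    (Fin.snoc m.1 (S.h t (fun i : Fin (t+1) => ω i) us),
     Fin.snoc m.2.1 (S.d t (fun i : Fin (t+1) => ω i) us), us)

/-- Closed-loop action for the observable-cost problem. -/
def actO (g : S.StratO) (ω : ℕ → S.W) (t : ℕ) : S.U := g t (S.memOfO g ω t)

/-- Closed-loop cost for the observable-cost problem. -/
def ccostO (g : S.StratO) (ω : ℕ → S.W) (t : ℕ) : ℝ :=
  S.d t (fun i : Fin (t+1) => ω i) (fun i : Fin (t+1) => S.actO g ω i)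

/-- Closed-loop accrued cost for the observable-cost problem. -/
def cAO (g : S.StratO) (ω : ℕ → S.W) (t : ℕ) : ℝ :=
  ∑ ℓ ∈ Finset.range t, S.γ ^ ℓ * S.ccostO g ω ℓ

/-- Closed-loop cost-to-go for the observable-cost problem. -/
def cCinfO (g : S.StratO) (ω : ℕ → S.W) (t : ℕ) : ℝ :=
  ∑' k : ℕ, S.γ ^ k * S.ccostO g ω (t + k)

/-- Strategy value function for the observable-cost problem. -/
def VO (g : S.StratO) (t : ℕ) (m : S.MemO t) : ℝ :=
  sSup ((fun ω => S.cAO g ω t + S.γ ^ t * S.cCinfO g ω t) '' {ω | S.memOfO g ω t = m})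

/-- Optimal value function for the observable-cost problem. -/
def VoptO (t : ℕ) (m : S.MemO t) : ℝ :=
  sInf ((fun g => S.VO g t m) '' {g : S.StratO | ∃ ω, S.memOfO g ω t = m})

/-- Optimal finite-horizon function for the observable-cost problem, fuel-indexed. -/
def JoptO : ℕ → (t : ℕ) → S.MemO t → ℝ
  | 0, t, m => sInf (Set.range fun u : S.U =>
      sSup ((fun ω => S.oA ω t m.2.2 + S.γ ^ t * S.oc ω t (Fin.snoc m.2.2 u)) ''
        S.consistentO t m))
  | (n+1), t, m => sInf (Set.range fun u : S.U =>
      sSup ((fun ω => JoptO n (t+1) (S.omemO ω (t+1) (Fin.snoc m.2.2 u))) '' S.consistentO t m))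

/-- `[[C_t, S̄_{t+1} | m_t, u_t]]`: conditional range of the current cost and next
(information-) state `S̄_{t+1} = σ̄_{t+1}(M_{t+1})` given the memory `m_t` and action `u_t`. -/
def CSrange {Sb : Type*} (σ : (t : ℕ) → S.MemO t → Sb) (t : ℕ) (m : S.MemO t) (u : S.U) :
    Set (ℝ × Sb) :=
  (fun ω => (S.oc ω t (Fin.snoc m.2.2 u), σ (t+1) (S.omemO ω (t+1) (Fin.snoc m.2.2 u)))) ''
    S.consistentO t m

/-- `[[C_t, Y_{t+1} | m_t, u_t]]`. -/
def CYrange (t : ℕ) (m : S.MemO t) (u : S.U) : Set (ℝ × S.Y) :=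
  (fun ω => (S.oc ω t (Fin.snoc m.2.2 u), S.oy ω (t+1) (Fin.snoc m.2.2 u))) '' S.consistentO t m

open Classical in
/-- Conditional indicator `𝕀((c_t, m_{t+1}) | m_t, u_t)` for the observable-cost problem. -/
def indObs (t : ℕ) (c : ℝ) (m' : S.MemO (t+1)) (m : S.MemO t) (u : S.U) : EReal :=
  if ∃ ω ∈ S.consistentO t m,
      S.oc ω t (Fin.snoc m.2.2 u) = c ∧ S.omemO ω (t+1) (Fin.snoc m.2.2 u) = m' then 0 else ⊥

/-- Conditional accrued distribution `r_t((c_t, m_{t+1}) | m_t, u_t)` for the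
observable-cost problem. -/
def rObs (t : ℕ) (c : ℝ) (m' : S.MemO (t+1)) (m : S.MemO t) (u : S.U) : EReal :=
  sSup ((fun a : ℝ => (a : EReal)) '' {a | a ∈ Set.Icc 0 S.amax ∧ ∃ ω ∈ S.consistentO t m,
      S.oc ω t (Fin.snoc m.2.2 u) = c ∧ S.omemO ω (t+1) (Fin.snoc m.2.2 u) = m' ∧
      S.oA ω t m.2.2 = a}) -
  sSup ((fun a : ℝ => (a : EReal)) '' {a | a ∈ Set.Icc 0 S.amax ∧ ∃ ω ∈ S.consistentO t m,
      S.oA ω t m.2.2 = a})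

end Sys

/-!
Induction on `n`. For `n = 0` the claim is the bound `c^min/(1-γ) ≤ C_t^∞ ≤ a^max` on the
cost-to-go. For the step, both `V_t^g(m_t)` and `γ^t·[𝒯(π)Λ](σ_t(m_t), γ^t) + sup [[A_t | m_t]]`
are suprema, over the memories `m_{t+1}` reachable from `m_t` under `u_t = g_t(m_t)`, of the same
quantities at time `t+1`. For `V` this is the splitting `C_t^∞ = C_t + γ·C_{t+1}^∞`. For `𝒯(π)`
it is the information-state property: `ρ(c, s' | σ_t(m_t), u_t)` equals
`sup [[A_t | m_t, C_t = c, S_{t+1} = s']] − sup [[A_t | m_t]]`, and `−∞` off the range of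
`(C_t, S_{t+1})`, so the supremum over `(c, s')` is a supremum over the fibres of `(C_t, S_{t+1})`.
Taking suprema preserves the two-sided additive error `γ^{n+t+1}·[c^min, c^max]/(1-γ)`.
-/

section Suprema

theorem EReal.coe_csSup {A : Set ℝ} (hA : A.Nonempty) (hb : BddAbove A) :
    ((sSup A : ℝ) : EReal) = sSup (Real.toEReal '' A) :=
  Monotone.map_csSup_of_continuousAt continuous_coe_real_ereal.continuousAt
    EReal.coe_strictMono.monotone hA hb

theorem Real.csSup_image_add_const {X : Set ℝ} (hX : X.Nonempty) (b : ℝ)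
    (hb : BddAbove ((· + b) '' X)) : sSup ((· + b) '' X) = sSup X + b :=
  ((OrderIso.addRight b).map_csSup' hX ((OrderIso.addRight b).bddAbove_image.mp hb)).symm

theorem Real.csSup_image_mul_add {X : Set ℝ} (hX : X.Nonempty) {a : ℝ} (ha : 0 < a) (b : ℝ)
    (hb : BddAbove ((fun x => a * x + b) '' X)) :
    sSup ((fun x => a * x + b) '' X) = a * sSup X + b :=
  let e := (OrderIso.mulLeft₀ a ha).trans (OrderIso.addRight b)
  (e.map_csSup' hX (e.bddAbove_image.mp hb)).symm

variable {α β : Type*}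

theorem bddAbove_image_csSup_fiber {f : α → ℝ} (p : α → β) {A : Set α}
    (hf : BddAbove (f '' A)) :
    BddAbove ((fun a => sSup (f '' {a' ∈ A | p a' = p a})) '' A) := by
  refine ⟨sSup (f '' A), ?_⟩
  rintro _ ⟨a, ha, rfl⟩
  exact csSup_le ⟨f a, a, ⟨ha, rfl⟩, rfl⟩
    (fun _ ⟨a', ha', h⟩ => h ▸ le_csSup hf ⟨a', ha'.1, rfl⟩)

theorem csSup_image_eq_csSup_image_csSup_fiber {f : α → ℝ} (p : α → β) {A : Set α}
    (hf : BddAbove (f '' A)) :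
    sSup (f '' A) = sSup ((fun a => sSup (f '' {a' ∈ A | p a' = p a})) '' A) := by
  rcases A.eq_empty_or_nonempty with rfl | hA
  · simp
  have hfib : ∀ a ∈ A, BddAbove (f '' {a' ∈ A | p a' = p a}) :=
    fun a _ => hf.mono (image_mono fun _ h => h.1)
  apply le_antisymm
  · refine csSup_le (hA.image f) ?_
    rintro _ ⟨a, ha, rfl⟩
    exact (le_csSup (hfib a ha) ⟨a, ⟨ha, rfl⟩, rfl⟩).trans
      (le_csSup (bddAbove_image_csSup_fiber p hf) ⟨a, ha, rfl⟩)
  · refine csSup_le (hA.image _) ?_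
    rintro _ ⟨a, ha, rfl⟩
    exact csSup_le ⟨f a, a, ⟨ha, rfl⟩, rfl⟩
      (fun _ ⟨a', ha', h⟩ => h ▸ le_csSup hf ⟨a', ha'.1, rfl⟩)

theorem csSup_image_add_le_and_le_add {f h : α → ℝ} {A : Set α} {a b : ℝ}
    (hA : A.Nonempty) (hh : BddAbove (h '' A)) (hlo : ∀ x ∈ A, f x + a ≤ h x)
    (hhi : ∀ x ∈ A, h x ≤ f x + b) :
    sSup (f '' A) + a ≤ sSup (h '' A) ∧ sSup (h '' A) ≤ sSup (f '' A) + b := by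
  have hf_le : ∀ x ∈ A, f x ≤ sSup (h '' A) - a := fun x hx =>
    le_sub_iff_add_le.mpr ((hlo x hx).trans (le_csSup hh ⟨x, hx, rfl⟩))
  have hf : BddAbove (f '' A) := ⟨_, by rintro _ ⟨x, hx, rfl⟩; exact hf_le x hx⟩
  constructor
  · exact le_sub_iff_add_le.mp (csSup_le (hA.image f) (by rintro _ ⟨x, hx, rfl⟩; exact hf_le x hx))
  · refine csSup_le (hA.image h) ?_
    rintro _ ⟨x, hx, rfl⟩
    linarith [hhi x hx, le_csSup hf ⟨x, hx, rfl⟩]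

end Suprema

namespace Sys

variable (S : Sys)

theorem one_sub_γ_pos : 0 < 1 - S.γ := sub_pos.mpr S.hγ1

theorem cmax_nonneg : 0 ≤ S.cmax :=
  let h := S.hcost 0 (fun _ => Classical.arbitrary S.W) (fun _ => Classical.arbitrary S.U)
  S.hcmin.trans (h.1.trans h.2)

theorem amax_nonneg : 0 ≤ S.amax := div_nonneg S.cmax_nonneg S.one_sub_γ_pos.le

theorem cmin_div_nonneg : 0 ≤ S.cmin / (1 - S.γ) := div_nonneg S.hcmin S.one_sub_γ_pos.le

theorem γ_pow_pos (t : ℕ) : 0 < S.γ ^ t := pow_pos S.hγ0 t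

theorem γ_pow_le_one (t : ℕ) : S.γ ^ t ≤ 1 := pow_le_one₀ S.hγ0.le S.hγ1.le

theorem oA_nonneg (ω : ℕ → S.W) (t : ℕ) (υ : Fin t → S.U) : 0 ≤ S.oA ω t υ :=
  Finset.sum_nonneg fun ℓ _ => mul_nonneg (S.γ_pow_pos ℓ).le (S.hcmin.trans (S.hcost ℓ _ _).1)

theorem oA_le_amax (ω : ℕ → S.W) (t : ℕ) (υ : Fin t → S.U) : S.oA ω t υ ≤ S.amax := by
  have hgeom : HasSum (fun ℓ : ℕ => S.γ ^ ℓ * S.cmax) S.amax := by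
    simpa [amax, div_eq_inv_mul] using
      (hasSum_geometric_of_lt_one S.hγ0.le S.hγ1).mul_right S.cmax
  calc S.oA ω t υ ≤ ∑ ℓ : Fin t, S.γ ^ (ℓ : ℕ) * S.cmax :=
        Finset.sum_le_sum fun ℓ _ =>
          mul_le_mul_of_nonneg_left (S.hcost ℓ _ _).2 (S.γ_pow_pos ℓ).le
    _ = ∑ ℓ ∈ Finset.range t, S.γ ^ ℓ * S.cmax :=
        Fin.sum_univ_eq_sum_range (fun ℓ => S.γ ^ ℓ * S.cmax) t
    _ ≤ S.amax := hgeom.summable.sum_le_tsum _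
        (fun ℓ _ => mul_nonneg (S.γ_pow_pos ℓ).le S.cmax_nonneg) |>.trans_eq hgeom.tsum_eq

theorem oA_succ (ω : ℕ → S.W) (t : ℕ) (υ : Fin t → S.U) (u : S.U) :
    S.oA ω (t+1) (Fin.snoc υ u) = S.oA ω t υ + S.γ ^ t * S.oc ω t (Fin.snoc υ u) := by
  rw [oA, oA, Fin.sum_univ_castSucc]
  congr 2
  ext ℓ
  congr 2
  ext j
  exact Fin.snoc_castSucc (α := fun _ => S.U) u υ ⟨j, j.2.trans_le (Fin.castSucc_lt_last ℓ)⟩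

theorem summable_cCinf (g : S.Strat) (ω : ℕ → S.W) (t : ℕ) :
    Summable (fun k : ℕ => S.γ ^ k * S.ccost g ω (t + k)) :=
  .of_nonneg_of_le
    (fun k => mul_nonneg (S.γ_pow_pos k).le (S.hcmin.trans (S.hcost _ _ _).1))
    (fun k => mul_le_mul_of_nonneg_left (S.hcost _ _ _).2 (S.γ_pow_pos k).le)
    ((summable_geometric_of_lt_one S.hγ0.le S.hγ1).mul_right S.cmax)

theorem cCinf_mem_Icc (g : S.Strat) (ω : ℕ → S.W) (t : ℕ) :
    S.cCinf g ω t ∈ Icc (S.cmin / (1 - S.γ)) S.amax := by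
  have hgeom (c : ℝ) : HasSum (fun k : ℕ => S.γ ^ k * c) (c / (1 - S.γ)) := by
    simpa [div_eq_inv_mul] using (hasSum_geometric_of_lt_one S.hγ0.le S.hγ1).mul_right c
  have hC := (S.summable_cCinf g ω t).hasSum
  exact ⟨hasSum_le (fun k => mul_le_mul_of_nonneg_left (S.hcost _ _ _).1 (S.γ_pow_pos k).le)
      (hgeom _) hC,
    hasSum_le (fun k => mul_le_mul_of_nonneg_left (S.hcost _ _ _).2 (S.γ_pow_pos k).le)
      hC (hgeom _)⟩

theorem cCinf_eq_ccost_add (g : S.Strat) (ω : ℕ → S.W) (t : ℕ) :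
    S.cCinf g ω t = S.ccost g ω t + S.γ * S.cCinf g ω (t+1) := by
  rw [cCinf, (S.summable_cCinf g ω t).tsum_eq_zero_add, cCinf, ← tsum_mul_left]
  congr 1
  · simp
  · refine tsum_congr fun k => ?_
    rw [pow_succ', show t + (k+1) = t + 1 + k by omega]
    ring

def nextMem (t : ℕ) (m : S.Mem t) (u : S.U) (ω : ℕ → S.W) : S.Mem (t+1) :=
  S.omem ω (t+1) (Fin.snoc m.2 u)

def truncMem {t : ℕ} (m : S.Mem (t+1)) : S.Mem t := (Fin.init m.1, Fin.init m.2)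

theorem omem_snoc (ω : ℕ → S.W) (t : ℕ) (υ : Fin t → S.U) (u : S.U) :
    S.omem ω (t+1) (Fin.snoc υ u) =
      (Fin.snoc (S.omem ω t υ).1 (S.h t (fun i => ω i) (Fin.snoc υ u)), Fin.snoc υ u) := by
  refine Prod.ext (funext fun i => Fin.lastCases ?_ (fun j => ?_) i) rfl
  · simp only [Fin.snoc_last]; rfl
  · simp only [Fin.snoc_castSucc]
    show S.oy ω j _ = S.oy ω j _
    congr 1
    funext k
    exact Fin.snoc_castSucc (α := fun _ => S.U) u υ
      ⟨k, (k.2.trans_eq (Fin.val_castSucc j)).trans_le (Nat.lt_succ_iff.mp j.2)⟩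

theorem truncMem_omem (ω : ℕ → S.W) (t : ℕ) (υ : Fin (t+1) → S.U) :
    S.truncMem (S.omem ω (t+1) υ) = S.omem ω t (Fin.init υ) := rfl

theorem mem_consistent_truncMem {t : ℕ} {m : S.Mem (t+1)} {ω : ℕ → S.W}
    (hω : ω ∈ S.consistent (t+1) m) : ω ∈ S.consistent t (S.truncMem m) :=
  (S.truncMem_omem ω t m.2).symm.trans (congrArg S.truncMem hω)

theorem mem_consistent_nextMem (t : ℕ) (m : S.Mem t) (u : S.U) (ω : ℕ → S.W) :
    ω ∈ S.consistent (t+1) (S.nextMem t m u ω) := rfl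

theorem truncMem_nextMem {t : ℕ} {m : S.Mem t} {ω : ℕ → S.W} (hω : ω ∈ S.consistent t m)
    (u : S.U) : S.truncMem (S.nextMem t m u ω) = m := by
  rw [nextMem, truncMem_omem, Fin.init_snoc]
  exact hω

theorem nextMem_eq {t : ℕ} {m : S.Mem t} {ω : ℕ → S.W} (hω : ω ∈ S.consistent t m) (u : S.U) :
    S.nextMem t m u ω = (Fin.snoc m.1 (S.h t (fun i => ω i) (Fin.snoc m.2 u)), Fin.snoc m.2 u) := by
  rw [nextMem, omem_snoc, show S.omem ω t m.2 = m from hω]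

theorem memOf_mem_consistent (g : S.Strat) (ω : ℕ → S.W) (t : ℕ) :
    ω ∈ S.consistent t (S.memOf g ω t) := by
  induction t with
  | zero => exact Prod.ext (funext fun i => by rw [Fin.fin_one_eq_zero i]; rfl) rfl
  | succ t ih => rw [show S.memOf g ω (t+1) = _ from (S.nextMem_eq ih _).symm]; rfl

theorem memOf_succ (g : S.Strat) (ω : ℕ → S.W) (t : ℕ) :
    S.memOf g ω (t+1) = S.nextMem t (S.memOf g ω t) (g t (S.memOf g ω t)) ω :=
  (S.nextMem_eq (S.memOf_mem_consistent g ω t) _).symm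

theorem eq_of_mem_consistent {t : ℕ} {m m' : S.Mem t} {ω : ℕ → S.W}
    (hm : ω ∈ S.consistent t m) (hm' : ω ∈ S.consistent t m') (h : m.2 = m'.2) : m = m' :=
  hm.symm.trans (h ▸ hm')

theorem memOf_eq_of_mem_consistent (g : S.Strat) {t : ℕ} {m : S.Mem t}
    (hm : ∃ ω₀, S.memOf g ω₀ t = m) {ω : ℕ → S.W} (hω : ω ∈ S.consistent t m) :
    S.memOf g ω t = m := by
  obtain ⟨ω₀, rfl⟩ := hm
  -- along a reachable memory `g` reproduces the recorded actions, so only these need comparing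
  refine S.eq_of_mem_consistent (S.memOf_mem_consistent g ω t) hω ?_
  induction t generalizing ω with
  | zero => exact Subsingleton.elim _ _
  | succ t ih =>
    have htrunc : S.truncMem (S.memOf g ω₀ (t+1)) = S.memOf g ω₀ t := by
      rw [memOf_succ, S.truncMem_nextMem (S.memOf_mem_consistent g ω₀ t)]
    have hω' := S.mem_consistent_truncMem hω
    rw [htrunc] at hω'
    have hprev : S.memOf g ω t = S.memOf g ω₀ t :=
      S.eq_of_mem_consistent (S.memOf_mem_consistent g ω t) hω' (ih hω')
    show (Fin.snoc (S.memOf g ω t).2 (g t (S.memOf g ω t)) : Fin (t+1) → S.U) = _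
    rw [hprev]
    rfl

theorem memOf_snd (g : S.Strat) (ω : ℕ → S.W) (t : ℕ) :
    (S.memOf g ω t).2 = fun i : Fin t => S.act g ω i := by
  induction t with
  | zero => exact Subsingleton.elim _ _
  | succ t ih =>
    funext i
    refine Fin.lastCases ?_ (fun j => ?_) i
    · exact Fin.snoc_last (α := fun _ => S.U) _ _
    · exact (Fin.snoc_castSucc (α := fun _ => S.U) _ _ j).trans (congrFun ih j)

theorem cA_eq_oA (g : S.Strat) (ω : ℕ → S.W) (t : ℕ) :
    S.cA g ω t = S.oA ω t (S.memOf g ω t).2 := by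
  rw [cA, ← Fin.sum_univ_eq_sum_range, memOf_snd]
  rfl

theorem ccost_eq_oc (g : S.Strat) (ω : ℕ → S.W) (t : ℕ) :
    S.ccost g ω t = S.oc ω t (Fin.snoc (S.memOf g ω t).2 (g t (S.memOf g ω t))) := by
  rw [ccost, ← S.memOf_snd g ω (t+1)]
  rfl

theorem consistent_nonempty (g : S.Strat) {t : ℕ} {m : S.Mem t}
    (hm : ∃ ω₀, S.memOf g ω₀ t = m) : (S.consistent t m).Nonempty :=
  let ⟨ω₀, h⟩ := hm; ⟨ω₀, h ▸ S.memOf_mem_consistent g ω₀ t⟩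

theorem setOf_memOf_eq_consistent (g : S.Strat) {t : ℕ} {m : S.Mem t}
    (hm : ∃ ω₀, S.memOf g ω₀ t = m) : {ω | S.memOf g ω t = m} = S.consistent t m :=
  ext fun ω => ⟨fun h => h ▸ S.memOf_mem_consistent g ω t,
    S.memOf_eq_of_mem_consistent g hm⟩

theorem V_eq (g : S.Strat) {t : ℕ} {m : S.Mem t} (hm : ∃ ω₀, S.memOf g ω₀ t = m) :
    S.V g t m =
      sSup ((fun ω => S.oA ω t m.2 + S.γ ^ t * S.cCinf g ω t) '' S.consistent t m) := by
  rw [V, S.setOf_memOf_eq_consistent g hm]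
  refine congrArg sSup (image_congr fun ω hω => ?_)
  rw [cA_eq_oA, S.memOf_eq_of_mem_consistent g hm hω]

theorem oA_add_pow_mul_cCinf_le (g : S.Strat) (ω : ℕ → S.W) (t : ℕ) (υ : Fin t → S.U) :
    S.oA ω t υ + S.γ ^ t * S.cCinf g ω t ≤ 2 * S.amax := by
  have := S.oA_le_amax ω t υ
  have := (S.cCinf_mem_Icc g ω t).2
  have := mul_le_of_le_one_left (S.cmin_div_nonneg.trans (S.cCinf_mem_Icc g ω t).1)
    (S.γ_pow_le_one t)
  linarith

theorem V_le (g : S.Strat) (t : ℕ) (m : S.Mem t) : S.V g t m ≤ 2 * S.amax := by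
  refine Real.sSup_le ?_ (by linarith [S.amax_nonneg])
  rintro _ ⟨ω, -, rfl⟩
  dsimp only
  rw [cA_eq_oA]
  exact S.oA_add_pow_mul_cCinf_le g ω t _

theorem setOf_nextMem_eq (t : ℕ) (m : S.Mem t) (u : S.U) {ω : ℕ → S.W}
    (hω : ω ∈ S.consistent t m) :
    {ω' ∈ S.consistent t m | S.nextMem t m u ω' = S.nextMem t m u ω} =
      S.consistent (t+1) (S.nextMem t m u ω) := by
  ext ω'
  refine ⟨fun ⟨_, h⟩ => h ▸ S.mem_consistent_nextMem t m u ω', fun h => ⟨?_, h⟩⟩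
  simpa only [S.truncMem_nextMem hω] using S.mem_consistent_truncMem h

theorem sSup_image_consistent_eq {f : (ℕ → S.W) → ℝ} (t : ℕ) (m : S.Mem t) (u : S.U)
    (hf : BddAbove (f '' S.consistent t m)) :
    sSup (f '' S.consistent t m) = sSup ((fun ω => sSup (f '' S.consistent (t+1)
      (S.nextMem t m u ω))) '' S.consistent t m) := by
  rw [csSup_image_eq_csSup_image_csSup_fiber (S.nextMem t m u) hf]
  exact congrArg sSup (image_congr fun ω hω => by rw [S.setOf_nextMem_eq t m u hω])

theorem exists_memOf_eq_nextMem (g : S.Strat) {t : ℕ} {m : S.Mem t}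
    (hm : ∃ ω₀, S.memOf g ω₀ t = m) {ω : ℕ → S.W} (hω : ω ∈ S.consistent t m) :
    ∃ ω', S.memOf g ω' (t+1) = S.nextMem t m (g t m) ω :=
  ⟨ω, by rw [memOf_succ, S.memOf_eq_of_mem_consistent g hm hω]⟩

theorem V_eq_sSup_V_nextMem (g : S.Strat) {t : ℕ} {m : S.Mem t}
    (hm : ∃ ω₀, S.memOf g ω₀ t = m) :
    S.V g t m = sSup ((fun ω => S.V g (t+1) (S.nextMem t m (g t m) ω)) '' S.consistent t m) := by
  set f := fun ω => S.oA ω (t+1) (Fin.snoc m.2 (g t m)) + S.γ ^ (t+1) * S.cCinf g ω (t+1)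
  have hf : ∀ ω ∈ S.consistent t m, S.oA ω t m.2 + S.γ ^ t * S.cCinf g ω t = f ω := by
    intro ω hω
    rw [cCinf_eq_ccost_add, ccost_eq_oc, S.memOf_eq_of_mem_consistent g hm hω]
    simp only [f, oA_succ]
    ring
  rw [V_eq _ _ hm, image_congr hf,
    S.sSup_image_consistent_eq t m (g t m)
      ⟨_, by rintro _ ⟨ω, -, rfl⟩; exact S.oA_add_pow_mul_cCinf_le g ω _ _⟩]
  exact congrArg sSup (image_congr fun ω hω =>
    (S.V_eq g (S.exists_memOf_eq_nextMem g hm hω)).symm)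

theorem sSup_Arange_add_le_V_and_V_le (g : S.Strat) {t : ℕ} {m : S.Mem t}
    (hm : ∃ ω₀, S.memOf g ω₀ t = m) :
    sSup (S.Arange t m) + S.γ ^ t * S.cmin / (1 - S.γ) ≤ S.V g t m ∧
      S.V g t m ≤ sSup (S.Arange t m) + S.γ ^ t * S.cmax / (1 - S.γ) := by
  rw [V_eq _ _ hm, mul_div_assoc, mul_div_assoc, ← amax]
  refine csSup_image_add_le_and_le_add (S.consistent_nonempty g hm)
    ⟨_, by rintro _ ⟨ω, -, rfl⟩; exact S.oA_add_pow_mul_cCinf_le g ω _ _⟩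
    (fun ω _ => ?_) (fun ω _ => ?_)
  · gcongr
    exacts [(S.γ_pow_pos t).le, (S.cCinf_mem_Icc g ω t).1]
  · gcongr
    exacts [(S.γ_pow_pos t).le, (S.cCinf_mem_Icc g ω t).2]

section InformationState

variable {Ss : Type*} (σ : (t : ℕ) → S.Mem t → Ss)

def costState (t : ℕ) (m : S.Mem t) (u : S.U) (ω : ℕ → S.W) : ℝ × Ss :=
  (S.oc ω t (Fin.snoc m.2 u), σ (t+1) (S.nextMem t m u ω))

theorem rcs_eq (t : ℕ) (c : ℝ) (s : Ss) (m : S.Mem t) (u : S.U) :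
    S.rcs σ t c s m u =
      sSup (Real.toEReal '' ((fun ω => S.oA ω t m.2) ''
        {ω ∈ S.consistent t m | S.costState σ t m u ω = (c, s)})) -
      sSup (Real.toEReal '' S.Arange t m) := by
  have hIcc (ω : ℕ → S.W) : S.oA ω t m.2 ∈ Icc 0 S.amax :=
    ⟨S.oA_nonneg ω t m.2, S.oA_le_amax ω t m.2⟩
  rw [rcs]
  congr 3
  · ext a
    simp only [costState, nextMem, Prod.mk.injEq, mem_ofPred_eq, Set.mem_image]
    constructor
    · rintro ⟨-, ω, hω, hc, hs, rfl⟩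
      exact ⟨ω, ⟨hω, hc, hs⟩, rfl⟩
    · rintro ⟨ω, ⟨hω, hc, hs⟩, rfl⟩
      exact ⟨hIcc ω, ω, hω, hc, hs, rfl⟩
  · ext a
    constructor
    · rintro ⟨-, ω, hω, rfl⟩
      exact ⟨ω, hω, rfl⟩
    · rintro ⟨ω, hω, rfl⟩
      exact ⟨hIcc ω, ω, hω, rfl⟩

theorem rcs_eq_bot {t : ℕ} {c : ℝ} {s : Ss} {m : S.Mem t} {u : S.U}
    (h : ∀ ω ∈ S.consistent t m, S.costState σ t m u ω ≠ (c, s)) : S.rcs σ t c s m u = ⊥ := by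
  rw [rcs_eq, sep_eq_empty_iff_mem_false.mpr h, image_empty, image_empty,
    sSup_empty, EReal.bot_sub]

theorem rcs_costState {t : ℕ} {m : S.Mem t} (u : S.U) {ω : ℕ → S.W}
    (hω : ω ∈ S.consistent t m) :
    S.rcs σ t (S.costState σ t m u ω).1 (S.costState σ t m u ω).2 m u =
      ((sSup ((fun ω' => S.oA ω' t m.2) ''
        {ω' ∈ S.consistent t m | S.costState σ t m u ω' = S.costState σ t m u ω}) -
        sSup (S.Arange t m) : ℝ) : EReal) := by
  have hbdd {A : Set (ℕ → S.W)} : BddAbove ((fun ω' => S.oA ω' t m.2) '' A) :=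
    ⟨S.amax, by rintro _ ⟨ω', -, rfl⟩; exact S.oA_le_amax ω' t m.2⟩
  have hfib :
      {ω' ∈ S.consistent t m | S.costState σ t m u ω' = S.costState σ t m u ω}.Nonempty :=
    ⟨ω, hω, rfl⟩
  have hA : (S.Arange t m).Nonempty := ⟨_, ω, hω, rfl⟩
  rw [rcs_eq, Prod.mk.eta, EReal.coe_sub, EReal.coe_csSup (hfib.image _) hbdd,
    EReal.coe_csSup hA hbdd]

theorem setOf_rcs_ne_bot_eq (t : ℕ) (m : S.Mem t) (u : S.U) :
    {q : ℝ × Ss | S.rcs σ t q.1 q.2 m u ≠ ⊥} = S.costState σ t m u '' S.consistent t m := by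
  ext q
  refine ⟨fun hq => ?_, ?_⟩
  · by_contra h
    exact hq (S.rcs_eq_bot σ fun ω hω hq' => h ⟨ω, hω, hq'⟩)
  · rintro ⟨ω, hω, rfl⟩
    rw [mem_ofPred_eq, S.rcs_costState σ u hω]
    exact EReal.coe_ne_bot _

theorem pow_mul_DPopLaw_add_sSup_Arange_eq_sSup_oA (ρ : ℝ → Ss → Ss → S.U → EReal)
    (π : Ss → ℝ → S.U) (Λ : Ss → ℝ → ℝ) {t : ℕ} {m : S.Mem t} {u : S.U}
    (hu : π (σ t m) (S.γ ^ t) = u) (hρ : ∀ c s, S.rcs σ t c s m u = ρ c s (σ t m) u)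
    (hc : (S.consistent t m).Nonempty)
    (hb : BddAbove ((fun ω => S.oA ω (t+1) (Fin.snoc m.2 u) +
      S.γ ^ (t+1) * Λ (σ (t+1) (S.nextMem t m u ω)) (S.γ ^ (t+1))) '' S.consistent t m)) :
    S.γ ^ t * DPopLaw S.γ ρ π Λ (σ t m) (S.γ ^ t) + sSup (S.Arange t m) =
      sSup ((fun ω => S.oA ω (t+1) (Fin.snoc m.2 u) +
        S.γ ^ (t+1) * Λ (σ (t+1) (S.nextMem t m u ω)) (S.γ ^ (t+1))) '' S.consistent t m) := by
  set H := fun ω => S.oA ω (t+1) (Fin.snoc m.2 u) +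
    S.γ ^ (t+1) * Λ (σ (t+1) (S.nextMem t m u ω)) (S.γ ^ (t+1))
  set cs := S.costState σ t m u
  set F : ℝ × Ss → ℝ := fun q =>
    q.1 + S.γ * Λ q.2 (S.γ ^ (t+1)) + (ρ q.1 q.2 (σ t m) u).toReal / S.γ ^ t
  have hsupp : {q : ℝ × Ss | ρ q.1 q.2 (σ t m) u ≠ ⊥} = cs '' S.consistent t m := by
    simp_rw [← hρ]
    exact S.setOf_rcs_ne_bot_eq σ t m u
  have hDP : DPopLaw S.γ ρ π Λ (σ t m) (S.γ ^ t) = sSup ((F ∘ cs) '' S.consistent t m) := by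
    rw [DPopLaw, hu, ← pow_succ', hsupp, image_image]
    rfl
  have hfiber : ∀ ω ∈ S.consistent t m,
      sSup (H '' {ω' ∈ S.consistent t m | cs ω' = cs ω}) =
        S.γ ^ t * F (cs ω) + sSup (S.Arange t m) := by
    intro ω hω
    set k := S.γ ^ t * (cs ω).1 + S.γ ^ (t+1) * Λ (cs ω).2 (S.γ ^ (t+1))
    have hH : ∀ ω' ∈ {ω' ∈ S.consistent t m | cs ω' = cs ω}, H ω' = S.oA ω' t m.2 + k := by
      rintro ω' ⟨-, hω'⟩
      simp only [H, k]
      rw [← hω']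
      simp only [cs, costState, nextMem, oA_succ]
      ring
    have hfib : {ω' ∈ S.consistent t m | cs ω' = cs ω}.Nonempty := ⟨ω, hω, rfl⟩
    rw [image_congr hH, ← image_image (· + k),
      Real.csSup_image_add_const (hfib.image _) k ?_]
    · simp only [F]
      rw [← hρ, S.rcs_costState σ u hω, EReal.toReal_coe]
      field_simp [(S.γ_pow_pos t).ne']
      ring
    · rw [image_image, ← image_congr hH]
      exact hb.mono (image_mono (sep_subset _ _))
  have hbF := bddAbove_image_csSup_fiber cs hb
  rw [image_congr hfiber] at hbF
  rw [csSup_image_eq_csSup_image_csSup_fiber cs hb, image_congr hfiber, hDP,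
    ← Real.csSup_image_mul_add (hc.image _) (S.γ_pow_pos t) _ (by rwa [image_image]),
    image_image]
  rfl

theorem pow_mul_DPopLaw_add_sSup_Arange_eq_sSup_nextMem (ρ : ℝ → Ss → Ss → S.U → EReal)
    (π : Ss → ℝ → S.U) (Λ : Ss → ℝ → ℝ) {t : ℕ} {m : S.Mem t} {u : S.U}
    (hu : π (σ t m) (S.γ ^ t) = u) (hρ : ∀ c s, S.rcs σ t c s m u = ρ c s (σ t m) u)
    (hc : (S.consistent t m).Nonempty)
    (hb : BddAbove ((fun ω => S.γ ^ (t+1) * Λ (σ (t+1) (S.nextMem t m u ω)) (S.γ ^ (t+1)) +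
      sSup (S.Arange (t+1) (S.nextMem t m u ω))) '' S.consistent t m)) :
    S.γ ^ t * DPopLaw S.γ ρ π Λ (σ t m) (S.γ ^ t) + sSup (S.Arange t m) =
      sSup ((fun ω => S.γ ^ (t+1) * Λ (σ (t+1) (S.nextMem t m u ω)) (S.γ ^ (t+1)) +
        sSup (S.Arange (t+1) (S.nextMem t m u ω))) '' S.consistent t m) := by
  have hbddA {m' : S.Mem (t+1)} : BddAbove (S.Arange (t+1) m') :=
    ⟨S.amax, by rintro _ ⟨ω', -, rfl⟩; exact S.oA_le_amax ω' _ _⟩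
  have hbH : BddAbove ((fun ω => S.oA ω (t+1) (Fin.snoc m.2 u) +
      S.γ ^ (t+1) * Λ (σ (t+1) (S.nextMem t m u ω)) (S.γ ^ (t+1))) '' S.consistent t m) := by
    obtain ⟨B, hB⟩ := hb
    refine ⟨B, ?_⟩
    rintro _ ⟨ω, hω, rfl⟩
    have hA : S.oA ω (t+1) (Fin.snoc m.2 u) ≤ sSup (S.Arange (t+1) (S.nextMem t m u ω)) :=
      le_csSup hbddA ⟨ω, S.mem_consistent_nextMem t m u ω, rfl⟩
    have := hB ⟨ω, hω, rfl⟩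
    dsimp only at this ⊢
    linarith
  rw [S.pow_mul_DPopLaw_add_sSup_Arange_eq_sSup_oA σ ρ π Λ hu hρ hc hbH,
    S.sSup_image_consistent_eq t m u hbH]
  refine congrArg sSup (image_congr fun ω hω => ?_)
  set k := S.γ ^ (t+1) * Λ (σ (t+1) (S.nextMem t m u ω)) (S.γ ^ (t+1))
  have hH : ∀ ω' ∈ S.consistent (t+1) (S.nextMem t m u ω),
      S.oA ω' (t+1) (Fin.snoc m.2 u) + S.γ ^ (t+1) * Λ (σ (t+1) (S.nextMem t m u ω'))
        (S.γ ^ (t+1)) = S.oA ω' (t+1) (S.nextMem t m u ω).2 + k := by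
    intro ω' hω'
    have h : ω' ∈ {ω'' ∈ S.consistent t m | S.nextMem t m u ω'' = S.nextMem t m u ω} := by
      rwa [S.setOf_nextMem_eq t m u hω]
    rw [h.2]
    rfl
  rw [image_congr hH, ← image_image (· + k), Real.csSup_image_add_const
    (Set.Nonempty.image _ ⟨ω, S.mem_consistent_nextMem t m u ω⟩) k
    ((monotone_id.add_const k).map_bddAbove hbddA), add_comm]
  rfl

theorem V_bounds_of_bounds_nextMem (ρ : ℝ → Ss → Ss → S.U → EReal) (π : Ss → ℝ → S.U)
    (Λ : Ss → ℝ → ℝ) (g : S.Strat) {t : ℕ} {m : S.Mem t} (hm : ∃ ω₀, S.memOf g ω₀ t = m)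
    (hu : π (σ t m) (S.γ ^ t) = g t m)
    (hρ : ∀ c s, S.rcs σ t c s m (g t m) = ρ c s (σ t m) (g t m)) (k : ℕ)
    (hnext : ∀ m' ∈ S.nextMem t m (g t m) '' S.consistent t m,
      S.γ ^ k * S.cmin / (1 - S.γ) + S.γ ^ (t+1) * Λ (σ (t+1) m') (S.γ ^ (t+1))
          + sSup (S.Arange (t+1) m') ≤ S.V g (t+1) m' ∧
        S.V g (t+1) m' ≤ sSup (S.Arange (t+1) m') + S.γ ^ (t+1) * Λ (σ (t+1) m') (S.γ ^ (t+1))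
          + S.γ ^ k * S.cmax / (1 - S.γ)) :
    S.γ ^ k * S.cmin / (1 - S.γ) + S.γ ^ t * DPopLaw S.γ ρ π Λ (σ t m) (S.γ ^ t)
        + sSup (S.Arange t m) ≤ S.V g t m ∧
      S.V g t m ≤ sSup (S.Arange t m) + S.γ ^ t * DPopLaw S.γ ρ π Λ (σ t m) (S.γ ^ t)
        + S.γ ^ k * S.cmax / (1 - S.γ) := by
  have hc := S.consistent_nonempty g hm
  set Φ := fun ω => S.γ ^ (t+1) * Λ (σ (t+1) (S.nextMem t m (g t m) ω)) (S.γ ^ (t+1)) +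
    sSup (S.Arange (t+1) (S.nextMem t m (g t m) ω))
  have hbounds (ω) (hω : ω ∈ S.consistent t m) := hnext _ ⟨ω, hω, rfl⟩
  have hcmin : 0 ≤ S.γ ^ k * S.cmin / (1 - S.γ) :=
    div_nonneg (mul_nonneg (S.γ_pow_pos _).le S.hcmin) S.one_sub_γ_pos.le
  have hbV : BddAbove ((fun ω => S.V g (t+1) (S.nextMem t m (g t m) ω)) '' S.consistent t m) :=
    ⟨2 * S.amax, by rintro _ ⟨ω, -, rfl⟩; exact S.V_le g _ _⟩
  have hbΦ : BddAbove (Φ '' S.consistent t m) := by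
    refine ⟨2 * S.amax, ?_⟩
    rintro _ ⟨ω, hω, rfl⟩
    linarith [(hbounds ω hω).1, S.V_le g (t+1) (S.nextMem t m (g t m) ω)]
  have hV := csSup_image_add_le_and_le_add (f := Φ) (a := S.γ ^ k * S.cmin / (1 - S.γ))
    (b := S.γ ^ k * S.cmax / (1 - S.γ)) hc hbV
    (fun ω hω => by simp only [Φ]; linarith [(hbounds ω hω).1])
    (fun ω hω => by simp only [Φ]; linarith [(hbounds ω hω).2])
  have hL := S.pow_mul_DPopLaw_add_sSup_Arange_eq_sSup_nextMem σ ρ π Λ hu hρ hc hbΦ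
  rw [S.V_eq_sSup_V_nextMem g hm]
  constructor <;> linarith [hV.1, hV.2]

end InformationState

end Sys

theorem stmt8_general (S : Sys) {Ss : Type}
    (σ : (t : ℕ) → S.Mem t → Ss) (ρ : ℝ → Ss → Ss → S.U → EReal)
    (hinfo : ∀ (t : ℕ) (m : S.Mem t) (u : S.U) (c : ℝ) (s : Ss),
      S.rcs σ t c s m u = ρ c s (σ t m) u)
    (π : Ss → ℝ → S.U) (g : S.Strat) (hg : ∀ t m, g t m = π (σ t m) (S.γ ^ t))
    (n t : ℕ) (m : S.Mem t) (hm : ∃ ω, S.memOf g ω t = m) :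
    S.γ ^ (n+t) * S.cmin / (1 - S.γ) + S.γ ^ t * DPopLawIter S.γ ρ π n (σ t m) (S.γ ^ t)
        + sSup (S.Arange t m) ≤ S.V g t m ∧
      S.V g t m ≤ sSup (S.Arange t m) + S.γ ^ t * DPopLawIter S.γ ρ π n (σ t m) (S.γ ^ t)
        + S.γ ^ (n+t) * S.cmax / (1 - S.γ) := by
  induction n generalizing t m with
  | zero =>
    have h := S.sSup_Arange_add_le_V_and_V_le g hm
    simp only [DPopLawIter, mul_zero, add_zero, zero_add]
    constructor <;> linarith [h.1, h.2]
  | succ n ih =>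
    rw [DPopLawIter, show n + 1 + t = n + (t+1) by omega]
    refine S.V_bounds_of_bounds_nextMem σ ρ π _ g hm (hg t m).symm (hinfo t m (g t m)) _ ?_
    rintro _ ⟨ω, hω, rfl⟩
    exact ih (t+1) _ (S.exists_memOf_eq_nextMem g hm hω)

theorem stmt8 (S : Sys) {Ss : Type} [Nonempty Ss] [MetricSpace Ss]
    (hSb : Bornology.IsBounded (Set.univ : Set Ss))
    (σ : (t : ℕ) → S.Mem t → Ss) (ρ : ℝ → Ss → Ss → S.U → EReal)
    (hρ : ∀ c s' s u, ρ c s' s u = ⊥ ∨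
      ∃ x : ℝ, ρ c s' s u = (x : EReal) ∧ x ∈ Set.Icc (-S.amax) 0)
    (hinfo : ∀ (t : ℕ) (m : S.Mem t) (u : S.U) (c : ℝ) (s : Ss),
      S.rcs σ t c s m u = ρ c s (σ t m) u)
    (π : Ss → ℝ → S.U) (g : S.Strat) (hg : ∀ t m, g t m = π (σ t m) (S.γ ^ t))
    (n t : ℕ) (m : S.Mem t) (hm : ∃ ω, S.memOf g ω t = m) :
    S.γ ^ (n+t) * S.cmin / (1 - S.γ) + S.γ ^ t * DPopLawIter S.γ ρ π n (σ t m) (S.γ ^ t)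
        + sSup (S.Arange t m) ≤ S.V g t m ∧
      S.V g t m ≤ sSup (S.Arange t m) + S.γ ^ t * DPopLawIter S.γ ρ π n (σ t m) (S.γ ^ t)
        + S.γ ^ (n+t) * S.cmax / (1 - S.γ) :=
  stmt8_general S σ ρ hinfo π g hg n t m hm
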